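/- Let n ≥ 2 be an even natural number and Ω > 0. Then the origin is a uniformly Lyapunov stable equilibrium of the shifted even system: for every ε > 0 there exists δ > 0, independent of ζ₀, such that for every ζ₀ > 0 and every solution x : [ζ₀, ∞) → ℝ² of the shifted even system with ‖x(ζ₀)‖ < δ, one has ‖x(ζ)‖ < ε for all ζ ≥ ζ₀. -/

import Mathlib

/-- A solution on [ζ₀, ∞) of the shifted even system arising from the
generalized Lane–Emden equation with γ = 1 + 1/n: x₁′ = x₂,
x₂′ = (1/(n+1))·(Ω·(x₁ − Ω^{−1/n})ⁿ − 1) − 2x₂/ζ. -/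
def IsSolShiftedEven (n : ℕ) (Ω ζ₀ : ℝ) (x₁ x₂ : ℝ → ℝ) : Prop :=
  ∀ ζ ∈ Set.Ici ζ₀,
    HasDerivWithinAt x₁ (x₂ ζ) (Set.Ici ζ₀) ζ ∧
    HasDerivWithinAt x₂
      ((1 / ((n : ℝ) + 1)) * (Ω * (x₁ ζ - Ω ^ (-1 / (n : ℝ))) ^ n - 1)
        - 2 * x₂ ζ / ζ)
      (Set.Ici ζ₀) ζ

/-!
With `a = Ω^(-1/n)` and `g t = (Ω (t - a)ⁿ - 1)/(n + 1)` the system reads `x₁' = x₂`,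
`x₂' = g x₁ - 2 x₂/ζ`. For a primitive `U` of `-g` the energy `x₂²/2 + U x₁` has derivative
`-2 x₂²/ζ ≤ 0`. Since `n` is even and `Ω aⁿ = 1`, `-g` is negative on `(-∞, 0)` and positive on
`(0, 2a)`, so `U` has a strict potential well at `0`. A trajectory starting with energy below the
rim height `min (U r) (U (-r))` can therefore never reach `|x₁| = r`, and the bound on the energy
then bounds `x₂` as well; none of the constants depend on `ζ₀`.
-/

open Set

lemma abs_lt_and_abs_lt_of_sqrt_sq_add_sq_lt {y z δ : ℝ} (h : √(y ^ 2 + z ^ 2) < δ) :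
    |y| < δ ∧ |z| < δ :=
  ⟨(Real.abs_le_sqrt (by nlinarith [sq_nonneg z])).trans_lt h,
    (Real.abs_le_sqrt (by nlinarith [sq_nonneg y])).trans_lt h⟩

section PotentialWell

variable {U : ℝ → ℝ} {a : ℝ}

lemma pos_of_potential_well (hU0 : U 0 = 0) (hmono : StrictMonoOn U (Icc 0 a))
    (hanti : StrictAntiOn U (Icc (-a) 0)) {t : ℝ} (ht0 : t ≠ 0) (ht : |t| ≤ a) : 0 < U t := by
  obtain ⟨hta, hat⟩ := abs_le.mp ht
  rcases ht0.lt_or_gt with h | h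
  · simpa [hU0] using hanti ⟨hta, h.le⟩ (right_mem_Icc.mpr (by linarith)) h
  · simpa [hU0] using hmono (left_mem_Icc.mpr (by linarith)) ⟨h.le, hat⟩ h

lemma nonneg_of_potential_well (hU0 : U 0 = 0) (hmono : StrictMonoOn U (Icc 0 a))
    (hanti : StrictAntiOn U (Icc (-a) 0)) {t : ℝ} (ht : |t| ≤ a) : 0 ≤ U t := by
  rcases eq_or_ne t 0 with rfl | ht0
  · exact hU0.ge
  · exact (pos_of_potential_well hU0 hmono hanti ht0 ht).le

lemma abs_lt_of_potential_le_antitone {E x : ℝ → ℝ} {ζ₀ r c : ℝ} (hcr : c ≤ U r)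
    (hcr' : c ≤ U (-r)) (hx : ContinuousOn x (Ici ζ₀)) (hE : AntitoneOn E (Ici ζ₀))
    (hUE : ∀ s ∈ Ici ζ₀, U (x s) ≤ E s) (hx₀ : |x ζ₀| < r) (hE₀ : E ζ₀ < c)
    {ζ : ℝ} (hζ : ζ₀ ≤ ζ) : |x ζ| < r := by
  by_contra! hrζ
  obtain ⟨t, ⟨hζ₀t, -⟩, hxt⟩ := intermediate_value_Icc hζ
    ((hx.mono Icc_subset_Ici_self).abs) ⟨hx₀.le, hrζ⟩
  have hUt : c ≤ U (x t) := by
    rcases abs_eq (abs_nonneg _ |>.trans_lt hx₀).le |>.mp hxt with h | h <;> rwa [h]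
  have := hUE t hζ₀t
  have := hE self_mem_Ici hζ₀t hζ₀t
  linarith

theorem uniformly_stable_of_potential_well (ha : 0 < a) (hU0 : U 0 = 0)
    (hUc : ContinuousAt U 0) (hmono : StrictMonoOn U (Icc 0 a))
    (hanti : StrictAntiOn U (Icc (-a) 0)) {ε : ℝ} (hε : 0 < ε) :
    ∃ δ > 0, ∀ (ζ₀ : ℝ) (x₁ x₂ : ℝ → ℝ), ContinuousOn x₁ (Ici ζ₀) →
      AntitoneOn (fun s => x₂ s ^ 2 / 2 + U (x₁ s)) (Ici ζ₀) →
      √(x₁ ζ₀ ^ 2 + x₂ ζ₀ ^ 2) < δ → ∀ ζ, ζ₀ ≤ ζ → √(x₁ ζ ^ 2 + x₂ ζ ^ 2) < ε := by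
  set r := min (ε / 2) a
  have hr : 0 < r := lt_min (by positivity) ha
  have hra : r ≤ a := min_le_right _ _
  have hUr : 0 < U r :=
    pos_of_potential_well hU0 hmono hanti hr.ne' (by rwa [abs_of_pos hr])
  have hUr' : 0 < U (-r) :=
    pos_of_potential_well hU0 hmono hanti (neg_ne_zero.mpr hr.ne')
      (by rwa [abs_neg, abs_of_pos hr])
  set c := min (min (U r) (U (-r))) (ε ^ 2 / 4)
  have hc : 0 < c := lt_min (lt_min hUr hUr') (by positivity)
  obtain ⟨δ₁, hδ₁, hUδ₁⟩ := Metric.eventually_nhds_iff.mp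
    (hUc.eventually_lt continuousAt_const (by rw [hU0]; positivity : U 0 < c / 2))
  refine ⟨min δ₁ (min r √c), by positivity, ?_⟩
  intro ζ₀ x₁ x₂ hx₁ hE hinit ζ hζ
  obtain ⟨hx₁₀, hx₂₀⟩ := abs_lt_and_abs_lt_of_sqrt_sq_add_sq_lt hinit
  simp only [lt_min_iff] at hx₁₀ hx₂₀
  have hE₀ : x₂ ζ₀ ^ 2 / 2 + U (x₁ ζ₀) < c := by
    have hU₀ : U (x₁ ζ₀) < c / 2 := hUδ₁ (by rw [Real.dist_0_eq_abs]; exact hx₁₀.1)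
    have hx₂c : x₂ ζ₀ ^ 2 < c := by
      rw [← sq_abs]
      exact (Real.lt_sqrt (abs_nonneg _)).mp hx₂₀.2.2
    linarith
  have hx₁ζ : |x₁ ζ| < r :=
    abs_lt_of_potential_le_antitone ((min_le_left _ _).trans (min_le_left _ _))
      ((min_le_left _ _).trans (min_le_right _ _)) hx₁ hE
      (fun s _ => le_add_of_nonneg_left (by positivity)) hx₁₀.2.1 hE₀ hζ
  have hUζ : 0 ≤ U (x₁ ζ) := nonneg_of_potential_well hU0 hmono hanti (hx₁ζ.le.trans hra)
  have hEζ : x₂ ζ ^ 2 / 2 + U (x₁ ζ) ≤ x₂ ζ₀ ^ 2 / 2 + U (x₁ ζ₀) := hE self_mem_Ici hζ hζ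
  have hcε : c ≤ ε ^ 2 / 4 := min_le_right _ _
  have hx₁sq : x₁ ζ ^ 2 < ε ^ 2 / 4 := by
    rw [← sq_abs, show ε ^ 2 / 4 = (ε / 2) ^ 2 by ring]
    exact pow_lt_pow_left₀ (hx₁ζ.trans_le (min_le_left _ _)) (abs_nonneg _) two_ne_zero
  rw [Real.sqrt_lt' hε]
  linarith

end PotentialWell

theorem antitoneOn_energy_of_damped {g U x₁ x₂ : ℝ → ℝ} {ζ₀ : ℝ} (hζ₀ : 0 ≤ ζ₀)
    (hU : ∀ t, HasDerivAt U (-g t) t)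
    (hsol : ∀ s ∈ Ici ζ₀, HasDerivWithinAt x₁ (x₂ s) (Ici ζ₀) s ∧
      HasDerivWithinAt x₂ (g (x₁ s) - 2 * x₂ s / s) (Ici ζ₀) s) :
    AntitoneOn (fun s => x₂ s ^ 2 / 2 + U (x₁ s)) (Ici ζ₀) := by
  have hE : ∀ s ∈ Ici ζ₀, HasDerivWithinAt (fun s => x₂ s ^ 2 / 2 + U (x₁ s))
      (-(2 * x₂ s ^ 2 / s)) (Ici ζ₀) s := by
    intro s hs
    obtain ⟨h₁, h₂⟩ := hsol s hs
    refine (((h₂.pow 2).div_const 2).add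
      ((hU (x₁ s)).comp_hasDerivWithinAt s h₁)).congr_deriv ?_
    push_cast
    ring
  refine antitoneOn_of_hasDerivWithinAt_nonpos (convex_Ici ζ₀)
    (fun s hs => (hE s hs).continuousWithinAt)
    (fun s hs => (hE s (interior_subset hs)).mono interior_subset) fun s hs => ?_
  rw [interior_Ici] at hs
  exact neg_nonpos.mpr (div_nonneg (by positivity) (hζ₀.trans hs.le))

section LaneEmden

variable (n : ℕ) (Ω a : ℝ)

noncomputable def laneEmdenPotential (t : ℝ) : ℝ :=
  (t - Ω * ((t - a) ^ (n + 1) - (-a) ^ (n + 1)) / (n + 1)) / (n + 1)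

lemma laneEmdenPotential_zero : laneEmdenPotential n Ω a 0 = 0 := by
  simp [laneEmdenPotential]

lemma hasDerivAt_laneEmdenPotential (t : ℝ) :
    HasDerivAt (laneEmdenPotential n Ω a) (-(1 / ((n : ℝ) + 1) * (Ω * (t - a) ^ n - 1))) t := by
  have h := ((hasDerivAt_id' t).sub_const a).pow (n + 1) |>.sub_const ((-a) ^ (n + 1))
    |>.const_mul Ω |>.div_const ((n : ℝ) + 1)
  refine (((hasDerivAt_id' t).sub h).div_const ((n : ℝ) + 1)).congr_deriv ?_
  push_cast
  field_simp
  ring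

lemma continuous_laneEmdenPotential : Continuous (laneEmdenPotential n Ω a) :=
  continuous_iff_continuousAt.mpr fun t =>
    (hasDerivAt_laneEmdenPotential n Ω a t).differentiableAt.continuousAt

variable {n Ω a} (hn : Even n) (hn0 : n ≠ 0) (hΩ : 0 < Ω) (hΩa : Ω * a ^ n = 1)
include hn hn0 hΩ hΩa

lemma mul_pow_lt_one_of_abs_lt {s : ℝ} (hs : |s| < a) : Ω * s ^ n < 1 := by
  rw [← hΩa, ← hn.pow_abs s]
  gcongr

lemma one_lt_mul_pow_of_lt_abs (ha : 0 ≤ a) {s : ℝ} (hs : a < |s|) : 1 < Ω * s ^ n := by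
  rw [← hΩa, ← hn.pow_abs s]
  gcongr

lemma strictMonoOn_laneEmdenPotential : StrictMonoOn (laneEmdenPotential n Ω a) (Icc 0 a) := by
  refine strictMonoOn_of_hasDerivWithinAt_pos (convex_Icc 0 a)
    (continuous_laneEmdenPotential n Ω a).continuousOn
    (fun t _ => (hasDerivAt_laneEmdenPotential n Ω a t).hasDerivWithinAt) fun t ht => ?_
  rw [interior_Icc] at ht
  have := mul_pow_lt_one_of_abs_lt hn hn0 hΩ hΩa
    (abs_lt.mpr ⟨by linarith [ht.1], by linarith [ht.1, ht.2]⟩ : |t - a| < a)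
  exact neg_pos.mpr (mul_neg_of_pos_of_neg (by positivity) (by linarith))

lemma strictAntiOn_laneEmdenPotential (ha : 0 ≤ a) :
    StrictAntiOn (laneEmdenPotential n Ω a) (Icc (-a) 0) := by
  refine strictAntiOn_of_hasDerivWithinAt_neg (convex_Icc (-a) 0)
    (continuous_laneEmdenPotential n Ω a).continuousOn
    (fun t _ => (hasDerivAt_laneEmdenPotential n Ω a t).hasDerivWithinAt) fun t ht => ?_
  rw [interior_Icc] at ht
  have := one_lt_mul_pow_of_lt_abs hn hn0 hΩ hΩa ha
    (by rw [abs_of_neg (by linarith [ht.2])]; linarith [ht.2] : a < |t - a|)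
  exact neg_neg_of_pos (mul_pos (by positivity) (by linarith))

end LaneEmden

lemma mul_rpow_neg_one_div_pow {Ω : ℝ} (hΩ : 0 < Ω) {n : ℕ} (hn : n ≠ 0) :
    Ω * (Ω ^ (-1 / (n : ℝ))) ^ n = 1 := by
  rw [← Real.rpow_natCast, ← Real.rpow_mul hΩ.le, div_mul_cancel₀ _ (Nat.cast_ne_zero.mpr hn),
    Real.rpow_neg_one, mul_inv_cancel₀ hΩ.ne']

theorem laneEmden_origin_uniformly_stable
    (n : ℕ) (hn : 2 ≤ n) (hne : Even n) (Ω : ℝ) (hΩ : 0 < Ω) :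
    ∀ ε : ℝ, 0 < ε → ∃ δ : ℝ, 0 < δ ∧
      ∀ ζ₀ : ℝ, 0 < ζ₀ →
        ∀ x₁ x₂ : ℝ → ℝ, IsSolShiftedEven n Ω ζ₀ x₁ x₂ →
          Real.sqrt (x₁ ζ₀ ^ 2 + x₂ ζ₀ ^ 2) < δ →
          ∀ ζ : ℝ, ζ₀ ≤ ζ → Real.sqrt (x₁ ζ ^ 2 + x₂ ζ ^ 2) < ε := by
  intro ε hε
  have hn0 : n ≠ 0 := by omega
  set a := Ω ^ (-1 / (n : ℝ))
  have ha : 0 < a := Real.rpow_pos_of_pos hΩ _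
  have hΩa : Ω * a ^ n = 1 := mul_rpow_neg_one_div_pow hΩ hn0
  obtain ⟨δ, hδ, hstable⟩ := uniformly_stable_of_potential_well ha
    (laneEmdenPotential_zero n Ω a) (continuous_laneEmdenPotential n Ω a).continuousAt
    (strictMonoOn_laneEmdenPotential hne hn0 hΩ hΩa)
    (strictAntiOn_laneEmdenPotential hne hn0 hΩ hΩa ha.le) hε
  exact ⟨δ, hδ, fun ζ₀ hζ₀ x₁ x₂ hsol => hstable ζ₀ x₁ x₂
    (fun s hs => (hsol s hs).1.continuousWithinAt)
    (antitoneOn_energy_of_damped hζ₀.le (hasDerivAt_laneEmdenPotential n Ω a) hsol)⟩
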